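/- Let q be a real number with q > 1 and let m, N be integers with 1 ≤ m ≤ N. Then Σ_{i=1}^{m} (−1)^{m−i} · q^{(m−i)(m−i−1)/2} · [m−1 choose i−1]_q · (∏_{j=i+1}^{m} (q^j + 1)) · q^{2iN} = Σ_{ℓ=0}^{m} (−1)^{ℓ} · q^{ℓ(ℓ−1) + (m−ℓ)(m−ℓ−1)} · [m choose ℓ]_{q²} · ((q^{m−ℓ} − q^{ℓ})/(q^m − 1)) · ∏_{j=0}^{m−ℓ−1} (q^{2(N−j)} − 1). -/

import Mathlib

/-!
Expanding `∏_{j<m-ℓ} (q^{2(N-j)} - 1)` by Gauss's binomial theorem in base `q²` makes the right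
side, like the left, a polynomial in `q^{2N}`. After exchanging the two summations and using
`[m, ℓ] [m-ℓ, i] = [m, i] [m-i, ℓ]`, the coefficient of `q^{2iN}` on the right is governed, with
`n = m - i`, by `∑_ℓ [n, ℓ]_{q²} q^{2 C(ℓ,2) + 2 C(n-ℓ,2)} (q^{i+n-ℓ} - q^ℓ)`. The weights are
symmetric under `ℓ ↦ n - ℓ`, so this is `(q^i - 1) D_n` with
`D_n = ∑_ℓ [n, ℓ]_{q²} q^{2 C(ℓ,2) + 2 C(n-ℓ,2) + ℓ} = q^{C(n,2)} ∏_{j=1}^{n} (q^j + 1)`.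
The term `i = 0` vanishes, and for `i ≥ 1` the coefficient matches the left side through
`[m, i]_{q²} ∏_{j ≤ m-i} (q^j + 1) = [m, i]_q ∏_{i < j ≤ m} (q^j + 1)` and
`[m, i]_q (q^i - 1) = (q^m - 1) [m-1, i-1]_q`.
-/

/-- The Gaussian binomial coefficient `[n choose k]_q` for a real base `q`. -/
noncomputable def gbinom (q : ℝ) (n k : ℕ) : ℝ :=
  ∏ j ∈ Finset.Icc 1 k, (q ^ (n - k + j) - 1) / (q ^ j - 1)

open Finset

lemma choose_two_succ (n : ℕ) : (n + 1).choose 2 = n.choose 2 + n := by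
  rw [Nat.choose_succ_succ', Nat.choose_one_right, add_comm]

lemma mul_pred_self_eq_two_mul_choose (n : ℕ) : n * (n - 1) = 2 * n.choose 2 := by
  rw [Nat.choose_two_right, Nat.mul_div_cancel' (Nat.even_mul_pred_self n).two_dvd]

lemma prod_Icc_one_mul_prod_Icc {M : Type*} [CommMonoid M] (f : ℕ → M) {k n : ℕ} (h : k ≤ n) :
    (∏ j ∈ Icc 1 k, f j) * ∏ j ∈ Icc (k + 1) n, f j = ∏ j ∈ Icc 1 n, f j := by
  have h1 : ∀ m, Icc 1 m = Ioc 0 m := fun m => Icc_add_one_left_eq_Ioc 0 m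
  rw [h1, h1, Icc_add_one_left_eq_Ioc, prod_Ioc_consecutive _ (Nat.zero_le k) h]

section GaussianBinomial

variable {Q : ℝ}

noncomputable def qFactorial (Q : ℝ) (n : ℕ) : ℝ := ∏ j ∈ Icc 1 n, (Q ^ j - 1)

lemma pow_sub_one_ne_zero (hQ : 1 < Q) {j : ℕ} (hj : j ≠ 0) : Q ^ j - 1 ≠ 0 :=
  (sub_pos.2 (one_lt_pow₀ hQ hj)).ne'

lemma qFactorial_ne_zero (hQ : 1 < Q) (n : ℕ) : qFactorial Q n ≠ 0 :=
  prod_ne_zero_iff.2 fun j hj => pow_sub_one_ne_zero hQ (by simp at hj; omega)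

lemma qFactorial_succ (Q : ℝ) (n : ℕ) :
    qFactorial Q (n + 1) = qFactorial Q n * (Q ^ (n + 1) - 1) :=
  prod_Icc_succ_top (by omega) _

lemma qFactorial_add (Q : ℝ) (a k : ℕ) :
    qFactorial Q (a + k) = qFactorial Q a * ∏ j ∈ Icc 1 k, (Q ^ (a + j) - 1) := by
  induction k with
  | zero => simp
  | succ k ih =>
    rw [← add_assoc, qFactorial_succ, ih, prod_Icc_succ_top (by omega), mul_assoc, add_assoc]

lemma gbinom_eq_div (hQ : 1 < Q) {n k : ℕ} (h : k ≤ n) :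
    gbinom Q n k = qFactorial Q n / (qFactorial Q k * qFactorial Q (n - k)) := by
  obtain ⟨a, rfl⟩ := Nat.exists_eq_add_of_le' h
  rw [gbinom, prod_div_distrib, Nat.add_sub_cancel, qFactorial_add]
  change _ / qFactorial Q k = _
  field_simp [qFactorial_ne_zero hQ]

lemma gbinom_zero_right (Q : ℝ) (n : ℕ) : gbinom Q n 0 = 1 := by simp [gbinom]

lemma gbinom_self (hQ : 1 < Q) (n : ℕ) : gbinom Q n n = 1 := by
  refine prod_eq_one fun j hj => ?_
  rw [Nat.sub_self, zero_add, div_self (pow_sub_one_ne_zero hQ (by simp at hj; omega))]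

lemma gbinom_symm (hQ : 1 < Q) {n k : ℕ} (h : k ≤ n) : gbinom Q n (n - k) = gbinom Q n k := by
  rw [gbinom_eq_div hQ (Nat.sub_le n k), gbinom_eq_div hQ h, Nat.sub_sub_self h, mul_comm]

lemma gbinom_succ_succ (hQ : 1 < Q) {n k : ℕ} (h : k < n) :
    gbinom Q (n + 1) (k + 1) = Q ^ (n - k) * gbinom Q n k + gbinom Q n (k + 1) := by
  obtain ⟨d, rfl⟩ := Nat.exists_eq_add_of_lt h
  rw [gbinom_eq_div hQ (by omega), gbinom_eq_div hQ (by omega), gbinom_eq_div hQ (by omega),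
    show k + d + 1 + 1 - (k + 1) = d + 1 by omega, show k + d + 1 - k = d + 1 by omega,
    show k + d + 1 - (k + 1) = d by omega, qFactorial_succ _ (k + d + 1), qFactorial_succ _ d,
    qFactorial_succ _ k]
  field_simp [qFactorial_ne_zero hQ, pow_sub_one_ne_zero hQ (Nat.succ_ne_zero _)]
  ring

lemma gbinom_succ_mul_pow_sub_one (hQ : 1 < Q) {n k : ℕ} (h : k ≤ n) :
    gbinom Q (n + 1) (k + 1) * (Q ^ (k + 1) - 1) = (Q ^ (n + 1) - 1) * gbinom Q n k := by
  rw [gbinom_eq_div hQ (by omega), gbinom_eq_div hQ h, Nat.add_sub_add_right, qFactorial_succ,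
    qFactorial_succ]
  field_simp [qFactorial_ne_zero hQ, pow_sub_one_ne_zero hQ (Nat.succ_ne_zero k)]

lemma gbinom_mul_gbinom (hQ : 1 < Q) {m i l : ℕ} (h : i + l ≤ m) :
    gbinom Q m l * gbinom Q (m - l) i = gbinom Q m i * gbinom Q (m - i) l := by
  rw [gbinom_eq_div hQ (by omega : l ≤ m), gbinom_eq_div hQ (by omega : i ≤ m),
    gbinom_eq_div hQ (by omega : i ≤ m - l), gbinom_eq_div hQ (by omega : l ≤ m - i),
    Nat.sub_sub, Nat.sub_sub, add_comm l i]
  field_simp [qFactorial_ne_zero hQ]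

lemma sum_mul_gbinom_succ (hQ : 1 < Q) (f : ℕ → ℝ) (n : ℕ) :
    ∑ l ∈ range (n + 2), f l * gbinom Q (n + 1) l =
      ∑ l ∈ range (n + 1), f (l + 1) * Q ^ (n - l) * gbinom Q n l +
        ∑ l ∈ range (n + 1), f l * gbinom Q n l := by
  have pascal : ∀ l ∈ range n, f (l + 1) * gbinom Q (n + 1) (l + 1) =
      f (l + 1) * Q ^ (n - l) * gbinom Q n l + f (l + 1) * gbinom Q n (l + 1) := fun l hl => by
    rw [gbinom_succ_succ hQ (mem_range.1 hl)]
    ring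
  rw [sum_range_succ, sum_range_succ', sum_congr rfl pascal, sum_add_distrib,
    sum_range_succ _ n, sum_range_succ' (fun l => f l * gbinom Q n l)]
  simp only [gbinom_self hQ, gbinom_zero_right, Nat.sub_self, pow_zero]
  ring

lemma sum_mul_gbinom_reflect (hQ : 1 < Q) (f : ℕ → ℝ) (n : ℕ) :
    ∑ l ∈ range (n + 1), f (n - l) * gbinom Q n l = ∑ l ∈ range (n + 1), f l * gbinom Q n l := by
  rw [← sum_range_reflect]
  refine sum_congr rfl fun l hl => ?_
  have hl : l ≤ n := Nat.lt_succ_iff.1 (mem_range.1 hl)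
  rw [Nat.add_sub_cancel, Nat.sub_sub_self hl, gbinom_symm hQ hl]

/-- Gauss's binomial theorem. -/
lemma prod_mul_pow_sub_one (hQ : 1 < Q) (y : ℝ) (d : ℕ) :
    ∏ k ∈ range d, (y * Q ^ k - 1) =
      ∑ i ∈ range (d + 1), (-1) ^ (d - i) * Q ^ i.choose 2 * y ^ i * gbinom Q d i := by
  induction d with
  | zero => simp [gbinom_zero_right]
  | succ d ih =>
    rw [prod_range_succ, ih, sum_mul_gbinom_succ hQ, sum_mul, ← sum_add_distrib]
    refine sum_congr rfl fun i hi => ?_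
    have hi : i ≤ d := Nat.lt_succ_iff.1 (mem_range.1 hi)
    have hpow : Q ^ (i + 1).choose 2 * Q ^ (d - i) = Q ^ i.choose 2 * Q ^ d := by
      rw [← pow_add, ← pow_add, choose_two_succ]
      congr 1
      omega
    rw [show d + 1 - (i + 1) = d - i by omega, show d + 1 - i = d - i + 1 by omega]
    linear_combination -(-1) ^ (d - i) * y ^ (i + 1) * gbinom Q d i * hpow

lemma prod_pow_sub_one_eq_sum (hQ : 1 < Q) {d N : ℕ} (h : d ≤ N) :
    ∏ j ∈ range d, (Q ^ (N - j) - 1) =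
      ∑ i ∈ range (d + 1),
        (-1) ^ (d - i) * Q ^ i.choose 2 * (Q ^ (N + 1 - d)) ^ i * gbinom Q d i := by
  rw [← prod_range_reflect, ← prod_mul_pow_sub_one hQ]
  refine prod_congr rfl fun k hk => ?_
  rw [← pow_add]
  congr 2
  have := mem_range.1 hk
  omega

end GaussianBinomial

section BaseSquare

variable {q : ℝ}

lemma qFactorial_sq (q : ℝ) (n : ℕ) :
    qFactorial (q ^ 2) n = qFactorial q n * ∏ j ∈ Icc 1 n, (q ^ j + 1) := by
  rw [qFactorial, qFactorial, ← prod_mul_distrib]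
  exact prod_congr rfl fun j _ => by ring

lemma gbinom_sq_mul_prod (hq : 1 < q) {n k : ℕ} (h : k ≤ n) :
    gbinom (q ^ 2) n k * ∏ j ∈ Icc 1 (n - k), (q ^ j + 1) =
      gbinom q n k * ∏ j ∈ Icc (k + 1) n, (q ^ j + 1) := by
  have hP : ∀ n, ∏ j ∈ Icc 1 n, (q ^ j + 1) ≠ 0 :=
    fun n => prod_ne_zero_iff.2 fun j _ => by positivity
  rw [gbinom_eq_div (one_lt_pow₀ hq two_ne_zero) h, gbinom_eq_div hq h, qFactorial_sq,
    qFactorial_sq, qFactorial_sq, ← prod_Icc_one_mul_prod_Icc _ h]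
  field_simp [qFactorial_ne_zero hq, hP]

/-- Pascal's rule writes the sum for `n + 1` as `q^{2n+1}` times the sum for `n` plus `q^n` times
the sum for `n` with weights reflected by `l ↦ n - l`, which is unchanged by the symmetry of
`[n, l]`. -/
lemma sum_pow_mul_gbinom_sq (hq : 1 < q) (n : ℕ) :
    ∑ l ∈ range (n + 1), q ^ (2 * (l.choose 2 + (n - l).choose 2) + l) * gbinom (q ^ 2) n l =
      q ^ n.choose 2 * ∏ j ∈ Icc 1 n, (q ^ j + 1) := by
  have hQ : 1 < q ^ 2 := one_lt_pow₀ hq two_ne_zero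
  induction n with
  | zero => simp [gbinom_zero_right]
  | succ n ih =>
    have shift : ∀ l ∈ range (n + 1),
        q ^ (2 * ((l + 1).choose 2 + (n + 1 - (l + 1)).choose 2) + (l + 1)) * (q ^ 2) ^ (n - l) *
          gbinom (q ^ 2) n l =
        q ^ (2 * n + 1) * (q ^ (2 * (l.choose 2 + (n - l).choose 2) + l) * gbinom (q ^ 2) n l) := by
      intro l hl
      have hl : l ≤ n := Nat.lt_succ_iff.1 (mem_range.1 hl)
      rw [← pow_mul, ← pow_add, ← mul_assoc, ← pow_add, choose_two_succ, Nat.add_sub_add_right]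
      congr 2
      omega
    have reflect : ∀ l ∈ range (n + 1),
        q ^ (2 * (l.choose 2 + (n + 1 - l).choose 2) + l) * gbinom (q ^ 2) n l =
        q ^ n * (q ^ (2 * ((n - l).choose 2 + (n - (n - l)).choose 2) + (n - l)) *
          gbinom (q ^ 2) n l) := by
      intro l hl
      have hl : l ≤ n := Nat.lt_succ_iff.1 (mem_range.1 hl)
      rw [← mul_assoc, ← pow_add, Nat.sub_sub_self hl, Nat.succ_sub hl, choose_two_succ]
      congr 2
      omega
    rw [sum_mul_gbinom_succ hQ, sum_congr rfl shift, sum_congr rfl reflect, ← mul_sum, ← mul_sum,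
      sum_mul_gbinom_reflect hQ (fun l => q ^ (2 * (l.choose 2 + (n - l).choose 2) + l)), ih,
      choose_two_succ, prod_Icc_succ_top (by omega)]
    ring

lemma sum_pow_mul_sub_mul_gbinom_sq (hq : 1 < q) (i n : ℕ) :
    ∑ l ∈ range (n + 1),
        q ^ (2 * (l.choose 2 + (n - l).choose 2)) * (q ^ (i + (n - l)) - q ^ l) *
          gbinom (q ^ 2) n l =
      (q ^ i - 1) * (q ^ n.choose 2 * ∏ j ∈ Icc 1 n, (q ^ j + 1)) := by
  have hQ : 1 < q ^ 2 := one_lt_pow₀ hq two_ne_zero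
  have split : ∀ l ∈ range (n + 1),
      q ^ (2 * (l.choose 2 + (n - l).choose 2)) * (q ^ (i + (n - l)) - q ^ l) *
          gbinom (q ^ 2) n l =
        q ^ i * (q ^ (2 * ((n - l).choose 2 + (n - (n - l)).choose 2) + (n - l)) *
          gbinom (q ^ 2) n l) -
        q ^ (2 * (l.choose 2 + (n - l).choose 2) + l) * gbinom (q ^ 2) n l := by
    intro l hl
    rw [Nat.sub_sub_self (Nat.lt_succ_iff.1 (mem_range.1 hl)), add_comm ((n - l).choose 2)]
    ring
  rw [sum_congr rfl split, sum_sub_distrib, ← mul_sum,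
    sum_mul_gbinom_reflect hQ (fun l => q ^ (2 * (l.choose 2 + (n - l).choose 2) + l)),
    sum_pow_mul_gbinom_sq hq]
  ring

end BaseSquare

section Expansion

variable {q : ℝ}

lemma lhs_eq_sum (hq : 1 < q) (m N : ℕ) :
    ∑ i ∈ Icc 1 m,
      (-1 : ℝ) ^ (m - i) * q ^ ((m - i) * (m - i - 1) / 2) * gbinom q (m - 1) (i - 1) *
        (∏ j ∈ Icc (i + 1) m, (q ^ j + 1)) * q ^ (2 * i * N) =
    ∑ i ∈ range (m + 1), (-1) ^ (m - i) * q ^ (2 * i * N) * gbinom (q ^ 2) m i / (q ^ m - 1) *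
      ((q ^ i - 1) * (q ^ (m - i).choose 2 * ∏ j ∈ Icc 1 (m - i), (q ^ j + 1))) := by
  rw [range_eq_Ico, sum_eq_sum_Ico_succ_bot (Nat.succ_pos m), pow_zero, sub_self, zero_mul,
    mul_zero, zero_add, zero_add, Nat.succ_eq_add_one, Ico_add_one_right_eq_Icc]
  refine sum_congr rfl fun i hi => ?_
  obtain ⟨hi, him⟩ := mem_Icc.1 hi
  obtain ⟨k, rfl⟩ := Nat.exists_eq_add_of_le' hi
  obtain ⟨n, rfl⟩ := Nat.exists_eq_add_of_le' (hi.trans him)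
  have habsorb := gbinom_succ_mul_pow_sub_one hq (Nat.le_of_succ_le_succ him)
  have hsq := gbinom_sq_mul_prod hq him
  have hm := pow_sub_one_ne_zero hq n.succ_ne_zero
  rw [← Nat.choose_two_right, Nat.add_sub_cancel, Nat.add_sub_cancel]
  field_simp
  linear_combination
    (1 - q ^ (k + 1)) * hsq - (∏ j ∈ Icc (k + 1 + 1) (n + 1), (q ^ j + 1)) * habsorb

lemma rhs_term_eq (hq : 1 < q) {m N i l : ℕ} (hil : i + l ≤ m) (hmN : m ≤ N) :
    (-1) ^ l * q ^ (l * (l - 1) + (m - l) * (m - l - 1)) * gbinom (q ^ 2) m l *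
        ((q ^ (m - l) - q ^ l) / (q ^ m - 1)) *
        ((-1) ^ (m - l - i) * (q ^ 2) ^ i.choose 2 * ((q ^ 2) ^ (N + 1 - (m - l))) ^ i *
          gbinom (q ^ 2) (m - l) i) =
      (-1) ^ (m - i) * q ^ (2 * i * N) * gbinom (q ^ 2) m i / (q ^ m - 1) *
        (q ^ (2 * (l.choose 2 + (m - i - l).choose 2)) * (q ^ (i + (m - i - l)) - q ^ l) *
          gbinom (q ^ 2) (m - i) l) := by
  have htri := gbinom_mul_gbinom (one_lt_pow₀ hq two_ne_zero) hil
  obtain ⟨b, rfl⟩ := Nat.exists_eq_add_of_le hil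
  obtain ⟨c, rfl⟩ := Nat.exists_eq_add_of_le hmN
  rw [show i + l + b - l - i = b by omega, show i + l + b - i - l = b by omega,
    show i + l + b - i = l + b by omega, show i + l + b - l = i + b by omega,
    show i + l + b + c + 1 - (i + b) = l + c + 1 by omega]
  rw [show i + l + b - l = i + b by omega, show i + l + b - i = l + b by omega] at htri
  have hexp : q ^ (l * (l - 1) + (i + b) * (i + b - 1)) *
      ((q ^ 2) ^ i.choose 2 * ((q ^ 2) ^ (l + c + 1)) ^ i) =
      q ^ (2 * i * (i + l + b + c)) * q ^ (2 * (l.choose 2 + b.choose 2)) := by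
    rw [← pow_mul, ← pow_mul, ← pow_mul, ← pow_add, ← pow_add, ← pow_add,
      mul_pred_self_eq_two_mul_choose, mul_pred_self_eq_two_mul_choose]
    congr 1
    rw [← Nat.cast_inj (R := ℚ)]
    push_cast [Nat.cast_choose_two]
    ring
  rw [pow_add (-1 : ℝ) l b]
  linear_combination (-1) ^ l * (-1) ^ b * ((q ^ (i + b) - q ^ l) / (q ^ (i + l + b) - 1)) *
    (gbinom (q ^ 2) (i + l + b) l * gbinom (q ^ 2) (i + b) i * hexp +
      q ^ (2 * i * (i + l + b + c)) * q ^ (2 * (l.choose 2 + b.choose 2)) * htri)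

lemma rhs_eq_sum (hq : 1 < q) {m N : ℕ} (hmN : m ≤ N) :
    ∑ l ∈ range (m + 1),
      (-1 : ℝ) ^ l * q ^ (l * (l - 1) + (m - l) * (m - l - 1)) * gbinom (q ^ 2) m l *
        ((q ^ (m - l) - q ^ l) / (q ^ m - 1)) * ∏ j ∈ range (m - l), (q ^ (2 * (N - j)) - 1) =
    ∑ i ∈ range (m + 1), (-1) ^ (m - i) * q ^ (2 * i * N) * gbinom (q ^ 2) m i / (q ^ m - 1) *
      ∑ l ∈ range (m - i + 1), q ^ (2 * (l.choose 2 + (m - i - l).choose 2)) *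
        (q ^ (i + (m - i - l)) - q ^ l) * gbinom (q ^ 2) (m - i) l := by
  have expand : ∀ l ∈ range (m + 1),
      (-1 : ℝ) ^ l * q ^ (l * (l - 1) + (m - l) * (m - l - 1)) * gbinom (q ^ 2) m l *
        ((q ^ (m - l) - q ^ l) / (q ^ m - 1)) * ∏ j ∈ range (m - l), (q ^ (2 * (N - j)) - 1) =
      ∑ i ∈ range (m - l + 1), (-1) ^ (m - i) * q ^ (2 * i * N) * gbinom (q ^ 2) m i / (q ^ m - 1) *
        (q ^ (2 * (l.choose 2 + (m - i - l).choose 2)) * (q ^ (i + (m - i - l)) - q ^ l) *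
          gbinom (q ^ 2) (m - i) l) := by
    intro l hl
    simp only [pow_mul q 2 (N - _)]
    rw [prod_pow_sub_one_eq_sum (one_lt_pow₀ hq two_ne_zero) (by omega), mul_sum]
    exact sum_congr rfl fun i hi => rhs_term_eq hq (by simp at hi hl; omega) hmN
  rw [sum_congr rfl expand, sum_comm' (t' := range (m + 1)) (s' := fun i => range (m - i + 1))
    (by intro l i; simp only [mem_range]; omega)]
  simp only [mul_sum]

end Expansion

theorem stmt7_general (q : ℝ) (hq : 1 < q) (m N : ℕ) (hmN : m ≤ N) :
    ∑ i ∈ Finset.Icc 1 m,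
      (-1 : ℝ) ^ (m - i) * q ^ ((m - i) * (m - i - 1) / 2) * gbinom q (m - 1) (i - 1) *
        (∏ j ∈ Finset.Icc (i + 1) m, (q ^ j + 1)) * q ^ (2 * i * N) =
    ∑ ℓ ∈ Finset.range (m + 1),
      (-1 : ℝ) ^ ℓ * q ^ (ℓ * (ℓ - 1) + (m - ℓ) * (m - ℓ - 1)) * gbinom (q ^ 2) m ℓ *
        ((q ^ (m - ℓ) - q ^ ℓ) / (q ^ m - 1)) *
        ∏ j ∈ Finset.range (m - ℓ), (q ^ (2 * (N - j)) - 1) := by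
  rw [lhs_eq_sum hq, rhs_eq_sum hq hmN]
  exact sum_congr rfl fun i _ => by rw [sum_pow_mul_sub_mul_gbinom_sq hq]

theorem stmt7 (q : ℝ) (hq : 1 < q) (m N : ℕ) (hm : 1 ≤ m) (hmN : m ≤ N) :
    ∑ i ∈ Finset.Icc 1 m,
      (-1 : ℝ) ^ (m - i) * q ^ ((m - i) * (m - i - 1) / 2) * gbinom q (m - 1) (i - 1) *
        (∏ j ∈ Finset.Icc (i + 1) m, (q ^ j + 1)) * q ^ (2 * i * N) =
    ∑ ℓ ∈ Finset.range (m + 1),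
      (-1 : ℝ) ^ ℓ * q ^ (ℓ * (ℓ - 1) + (m - ℓ) * (m - ℓ - 1)) * gbinom (q ^ 2) m ℓ *
        ((q ^ (m - ℓ) - q ^ ℓ) / (q ^ m - 1)) *
        ∏ j ∈ Finset.range (m - ℓ), (q ^ (2 * (N - j)) - 1) :=
  stmt7_general q hq m N hmN
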